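/- arXiv:2101.01045 — 2 statements merged into one kernel-verified Lean document; each statement's English description precedes it below -/
import Mathlib

section
/- Let d ≥ 1, z⁽⁰⁾ ∈ ℝᵈ, and let Ḡ⁽⁰⁾, Ḡ⁽¹⁾, Ḡ⁽²⁾, … ∈ ℝᵈ be unit vectors (‖Ḡ⁽ᵏ⁾‖₂ = 1). Define s⁽⁰⁾ = 0, s⁽ᵏ⁺¹⁾ = s⁽ᵏ⁾ + Ḡ⁽ᵏ⁾, β₀ = 1, β_{k+1} = β_k + 1/β_k, z⁽ᵏ⁺¹⁾ = z⁽⁰⁾ − s⁽ᵏ⁺¹⁾/β_k, and for s ∈ ℝᵈ, β > 0 set U_β^s(z) := −sᵀ(z − z⁽⁰⁾) − (β/2)‖z − z⁽⁰⁾‖₂². Then for every K ≥ 1: Σ_{k=1}^{K} ⟨z⁽ᵏ⁾ − z⁽⁰⁾, Ḡ⁽ᵏ⁾⟩ ≤ −U_{β_K}^{s⁽ᴷ⁺¹⁾}(z⁽ᴷ⁺¹⁾) + β_K/2. -/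
open scoped RealInnerProductSpace

/-- Telescoping bound for the dual-averaging iteration: with unit vectors `Ḡ⁽ᵏ⁾`,
`s⁽⁰⁾ = 0`, `s⁽ᵏ⁺¹⁾ = s⁽ᵏ⁾ + Ḡ⁽ᵏ⁾`, `β₀ = 1`, `β_{k+1} = β_k + 1/β_k`,
`z⁽ᵏ⁺¹⁾ = z⁽⁰⁾ - s⁽ᵏ⁺¹⁾/β_k`, and
`U_β^s(z) = -⟨s, z - z⁽⁰⁾⟩ - (β/2)‖z - z⁽⁰⁾‖²`, one has
`∑_{k=1}^K ⟨z⁽ᵏ⁾ - z⁽⁰⁾, Ḡ⁽ᵏ⁾⟩ ≤ -U_{β_K}^{s⁽ᴷ⁺¹⁾}(z⁽ᴷ⁺¹⁾) + β_K/2`. -/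
theorem dual_averaging_telescope
    (d : ℕ) (hd : 1 ≤ d)
    (G : ℕ → EuclideanSpace ℝ (Fin d))
    (hG : ∀ k, ‖G k‖ = 1)
    (s : ℕ → EuclideanSpace ℝ (Fin d))
    (hs0 : s 0 = 0)
    (hs : ∀ k, s (k + 1) = s k + G k)
    (β : ℕ → ℝ)
    (hβ0 : β 0 = 1)
    (hβ : ∀ k, β (k + 1) = β k + 1 / β k)
    (z : ℕ → EuclideanSpace ℝ (Fin d))
    (hz : ∀ k, z (k + 1) = z 0 - (β k)⁻¹ • s (k + 1))
    (U : ℝ → EuclideanSpace ℝ (Fin d) → EuclideanSpace ℝ (Fin d) → ℝ)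
    (hU : ∀ (b : ℝ) (w v : EuclideanSpace ℝ (Fin d)),
      U b w v = -⟪w, v - z 0⟫ - b / 2 * ‖v - z 0‖ ^ 2) :
    ∀ K : ℕ, 1 ≤ K →
      ∑ k ∈ Finset.Icc 1 K, ⟪z k - z 0, G k⟫
        ≤ -U (β K) (s (K + 1)) (z (K + 1)) + β K / 2 := by
  have hβpos : ∀ k, 0 < β k := by
    intro k
    induction k with
    | zero => rw [hβ0]; norm_num
    | succ n ih => rw [hβ n]; positivity
  -- key invariant
  have key : ∀ K : ℕ, ∑ k ∈ Finset.Icc 1 K, ⟪z k - z 0, G k⟫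
      + ‖s (K + 1)‖ ^ 2 / (2 * β K) ≤ β K / 2 := by
    intro K
    induction K with
    | zero =>
        simp only [Finset.Icc_self, hβ0]
        rw [hs 0, hs0, zero_add]
        simp [hG 0]
    | succ n ih =>
        have ha := hβpos n
        have hb := hβpos (n + 1)
        have hsum : ∑ k ∈ Finset.Icc 1 (n + 1), ⟪z k - z 0, G k⟫
            = ∑ k ∈ Finset.Icc 1 n, ⟪z k - z 0, G k⟫ + ⟪z (n + 1) - z 0, G (n + 1)⟫ := by
          rw [← Finset.sum_Icc_succ_top (by omega : 1 ≤ n + 1)]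
        have hzdiff : z (n + 1) - z 0 = -((β n)⁻¹ • s (n + 1)) := by
          rw [hz n]; abel
        have hterm : ⟪z (n + 1) - z 0, G (n + 1)⟫
            = -((β n)⁻¹ * ⟪s (n + 1), G (n + 1)⟫) := by
          rw [hzdiff, inner_neg_left, real_inner_smul_left]
        have hnorm : ‖s (n + 2)‖ ^ 2
            = ‖s (n + 1)‖ ^ 2 + 2 * ⟪s (n + 1), G (n + 1)⟫ + 1 := by
          rw [hs (n + 1), norm_add_sq_real, hG (n + 1)]
          ring
        have hnn : (0 : ℝ) ≤ ‖s (n + 1)‖ ^ 2 + 2 * ⟪s (n + 1), G (n + 1)⟫ + 1 := by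
          rw [← hnorm]; positivity
        set S := ‖s (n + 1)‖ ^ 2 with hS
        set t := ⟪s (n + 1), G (n + 1)⟫ with ht
        have hSnn : 0 ≤ S := by positivity
        rw [hsum, hterm, show n + 1 + 1 = n + 2 from rfl, hnorm, hβ n]
        have ihS : ∑ k ∈ Finset.Icc 1 n, ⟪z k - z 0, G k⟫ ≤ β n / 2 - S / (2 * β n) := by
          linarith [ih]
        have hane : β n ≠ 0 := ne_of_gt ha
        have hbne : β n + 1 / β n ≠ 0 := by positivity
        calc ∑ k ∈ Finset.Icc 1 n, ⟪z k - z 0, G k⟫ + -((β n)⁻¹ * t)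
              + (S + 2 * t + 1) / (2 * (β n + 1 / β n))
            ≤ (β n / 2 - S / (2 * β n)) + -((β n)⁻¹ * t)
              + (S + 2 * t + 1) / (2 * (β n + 1 / β n)) := by linarith
          _ ≤ (β n + 1 / β n) / 2 := by
              have heq : (β n + 1 / β n) / 2 - (β n / 2 - S / (2 * β n) + -((β n)⁻¹ * t)
                  + (S + 2 * t + 1) / (2 * (β n + 1 / β n)))
                  = (S + 2 * t + 1) / (2 * β n * (β n ^ 2 + 1)) := by
                field_simp
                ring
              rw [← sub_nonneg, heq]
              exact div_nonneg hnn (by positivity)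
  intro K hK
  rw [hU, hz K]
  have hzdiff : z 0 - (β K)⁻¹ • s (K + 1) - z 0 = -((β K)⁻¹ • s (K + 1)) := by abel
  rw [hzdiff, inner_neg_right, real_inner_smul_right, norm_neg, norm_smul]
  have ha := hβpos K
  have hKey := key K
  have h1 : ⟪s (K + 1), s (K + 1)⟫ = ‖s (K + 1)‖ ^ 2 := real_inner_self_eq_norm_sq (s (K + 1))
  rw [h1]
  have hna : ‖(β K)⁻¹‖ = (β K)⁻¹ := by
    rw [Real.norm_eq_abs, abs_of_pos (by positivity)]
  rw [hna]
  have : (β K)⁻¹ * ‖s (K + 1)‖ ^ 2 - β K / 2 * ((β K)⁻¹ * ‖s (K + 1)‖) ^ 2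
      = ‖s (K + 1)‖ ^ 2 / (2 * β K) := by
    field_simp
    ring
  nlinarith [hKey]
end

section
/- Assume the saddle-point assumption, let s ∈ [1,2] and ρ > 0. Let x ∈ ℝⁿ, λ ∈ ℝᵐ with λ ≥ 0, ν ∈ ℝˡ, and set z := (x, λ, ν). Choose g₀ ∈ ∂f₀(x) and gᵢ ∈ ∂Fᵢ(x), and set ϱ := s‖F(x)‖₂^{s−2} F(x) if F(x) ≠ 0 and ϱ := 0 otherwise, ς := s‖A x − b‖₂^{s−2}(A x − b) if A x ≠ b and ς := 0 otherwise, and T := (g₀ + Σᵢ (λᵢ + ρ ϱᵢ) gᵢ + Aᵀ(ν + ρ ς), −F(x), −(A x − b)) ∈ ℝ^{n+m+l}. Then ⟨T, z − z*⟩ ≥ L(x, λ*, ν*) − p* + ρ s (‖F(x)‖₂^s + ‖A x − b‖₂^s) ≥ 0. -/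
open scoped RealInnerProductSpace Classical
open Matrix

/-- `A x` for `A` an `l × n` real matrix and `x ∈ ℝⁿ`, as Euclidean spaces. -/
noncomputable def mulVecE {l n : ℕ} (A : Matrix (Fin l) (Fin n) ℝ)
    (x : EuclideanSpace ℝ (Fin n)) : EuclideanSpace ℝ (Fin l) :=
  Matrix.toEuclideanLin A x

/-- `F(x) = (max{f₁(x),0}, …, max{f_m(x),0})`. -/
noncomputable def Fplus {n m : ℕ} (f : Fin m → EuclideanSpace ℝ (Fin n) → ℝ)
    (x : EuclideanSpace ℝ (Fin n)) : EuclideanSpace ℝ (Fin m) :=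
  (WithLp.equiv 2 (Fin m → ℝ)).symm fun i => max (f i x) 0

/-- The Lagrangian `L(x, λ, ν) = f₀(x) + λᵀF(x) + νᵀ(Ax - b)`. -/
noncomputable def Lag {n m l : ℕ} (f0 : EuclideanSpace ℝ (Fin n) → ℝ)
    (f : Fin m → EuclideanSpace ℝ (Fin n) → ℝ)
    (A : Matrix (Fin l) (Fin n) ℝ) (b : EuclideanSpace ℝ (Fin l))
    (x : EuclideanSpace ℝ (Fin n)) (lam : EuclideanSpace ℝ (Fin m))
    (nu : EuclideanSpace ℝ (Fin l)) : ℝ :=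
  f0 x + ⟪lam, Fplus f x⟫ + ⟪nu, mulVecE A x - b⟫


lemma inner_mulVecE_transpose {l n : ℕ} (A : Matrix (Fin l) (Fin n) ℝ)
    (v : EuclideanSpace ℝ (Fin l)) (w : EuclideanSpace ℝ (Fin n)) :
    ⟪mulVecE Aᵀ v, w⟫ = ⟪v, mulVecE A w⟫ := by
  simp [mulVecE, Matrix.toEuclideanLin_apply, PiLp.inner_apply, RCLike.inner_apply,
    Matrix.mulVec, dotProduct, Finset.mul_sum, Finset.sum_mul]
  rw [Finset.sum_comm]
  apply Finset.sum_congr rfl; intro i _; apply Finset.sum_congr rfl; intro j _; ring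

lemma mulVecE_sub {l n : ℕ} (A : Matrix (Fin l) (Fin n) ℝ)
    (x y : EuclideanSpace ℝ (Fin n)) :
    mulVecE A (x - y) = mulVecE A x - mulVecE A y := by simp [mulVecE]

/-- PDS key inequality:
`⟨T, z - z*⟩ ≥ L(x, λ*, ν*) - p* + ρs(‖F(x)‖₂^s + ‖Ax - b‖₂^s) ≥ 0`. -/
theorem pds_inner_lower_bound
    (n m l : ℕ)
    (f0 : EuclideanSpace ℝ (Fin n) → ℝ)
    (f : Fin m → EuclideanSpace ℝ (Fin n) → ℝ)
    (hf0 : ConvexOn ℝ Set.univ f0)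
    (hf : ∀ i, ConvexOn ℝ Set.univ (f i))
    (A : Matrix (Fin l) (Fin n) ℝ) (b : EuclideanSpace ℝ (Fin l))
    (pstar : ℝ)
    (xstar : EuclideanSpace ℝ (Fin n))
    (lamstar : EuclideanSpace ℝ (Fin m)) (nustar : EuclideanSpace ℝ (Fin l))
    -- x* is primal optimal with value p*
    (hxfeas : ∀ i, f i xstar ≤ 0) (hxeq : mulVecE A xstar = b)
    (hxval : f0 xstar = pstar)
    -- saddle-point assumption
    (hlamstar : ∀ i, 0 ≤ lamstar i)
    (hsaddle_eq : Lag f0 f A b xstar lamstar nustar = pstar)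
    (hsaddle1 : ∀ (lam : EuclideanSpace ℝ (Fin m)) (nu : EuclideanSpace ℝ (Fin l)),
      (∀ i, 0 ≤ lam i) → Lag f0 f A b xstar lam nu ≤ pstar)
    (hsaddle2 : ∀ x, pstar ≤ Lag f0 f A b x lamstar nustar)
    -- parameters
    (s ρ : ℝ) (hs1 : 1 ≤ s) (hs2 : s ≤ 2) (hρ : 0 < ρ)
    -- the point and the subgradients
    (x : EuclideanSpace ℝ (Fin n))
    (lam : EuclideanSpace ℝ (Fin m)) (nu : EuclideanSpace ℝ (Fin l))
    (hlam : ∀ i, 0 ≤ lam i)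
    (g0 : EuclideanSpace ℝ (Fin n))
    (hg0 : ∀ y, ⟪g0, y - x⟫ ≤ f0 y - f0 x)
    (g : Fin m → EuclideanSpace ℝ (Fin n))
    (hg : ∀ i y, ⟪g i, y - x⟫ ≤ max (f i y) 0 - max (f i x) 0)
    -- the penalty terms
    (ϱ : EuclideanSpace ℝ (Fin m))
    (hϱ : ϱ = if Fplus f x ≠ 0 then (s * ‖Fplus f x‖ ^ (s - 2)) • Fplus f x else 0)
    (ς : EuclideanSpace ℝ (Fin l))
    (hς : ς = if mulVecE A x ≠ b then
        (s * ‖mulVecE A x - b‖ ^ (s - 2)) • (mulVecE A x - b) else 0)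
    -- the primal component of T
    (Tx : EuclideanSpace ℝ (Fin n))
    (hTx : Tx = g0 + (∑ i, (lam i + ρ * ϱ i) • g i) + mulVecE Aᵀ (nu + ρ • ς)) :
    Lag f0 f A b x lamstar nustar - pstar
        + ρ * s * (‖Fplus f x‖ ^ s + ‖mulVecE A x - b‖ ^ s)
      ≤ ⟪Tx, x - xstar⟫ + ⟪-(Fplus f x), lam - lamstar⟫
        + ⟪-(mulVecE A x - b), nu - nustar⟫ ∧
    0 ≤ Lag f0 f A b x lamstar nustar - pstar
        + ρ * s * (‖Fplus f x‖ ^ s + ‖mulVecE A x - b‖ ^ s) := by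
  have hspos : (0:ℝ) < s := lt_of_lt_of_le one_pos hs1
  set F : EuclideanSpace ℝ (Fin m) := Fplus f x with hFdef
  set r : EuclideanSpace ℝ (Fin l) := mulVecE A x - b with hrdef
  have hFi : ∀ i, F i = max (f i x) 0 := fun i => rfl
  have hFnn : ∀ i, 0 ≤ F i := fun i => le_max_right _ _
  -- inner products with penalty vectors
  have hϱF : ⟪ϱ, F⟫ = s * ‖F‖ ^ s := by
    by_cases h : F = 0
    · rw [hϱ]; simp [h, Real.zero_rpow (ne_of_gt hspos)]
    · rw [hϱ, if_pos h, real_inner_smul_left, real_inner_self_eq_norm_sq]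
      have hn : 0 < ‖F‖ := norm_pos_iff.mpr h
      rw [mul_assoc, ← Real.rpow_natCast ‖F‖ 2, ← Real.rpow_add hn]
      norm_num
  have hςr : ⟪ς, r⟫ = s * ‖r‖ ^ s := by
    by_cases h : r = 0
    · have : mulVecE A x = b := by rwa [hrdef, sub_eq_zero] at h
      rw [hς, if_neg (by simpa using this)]
      simp [h, Real.zero_rpow (ne_of_gt hspos)]
    · have hM : mulVecE A x ≠ b := fun hc => h (by rw [hrdef, hc, sub_self])
      rw [hς, if_pos hM, real_inner_smul_left, real_inner_self_eq_norm_sq]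
      have hn : 0 < ‖r‖ := norm_pos_iff.mpr h
      rw [mul_assoc, ← Real.rpow_natCast ‖r‖ 2, ← Real.rpow_add hn]
      norm_num
  have hϱnn : ∀ i, 0 ≤ ϱ i := by
    intro i
    rw [hϱ]
    split_ifs with h
    · have : ((s * ‖Fplus f x‖ ^ (s - 2)) • Fplus f x) i
          = (s * ‖Fplus f x‖ ^ (s - 2)) * Fplus f x i := rfl
      rw [this]
      exact mul_nonneg (mul_nonneg hspos.le (Real.rpow_nonneg (norm_nonneg _) _)) (hFnn i)
    · simp
  have hcoef : ∀ i, 0 ≤ lam i + ρ * ϱ i :=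
    fun i => add_nonneg (hlam i) (mul_nonneg hρ.le (hϱnn i))
  -- subgradient bounds
  have hg0x : f0 x - f0 xstar ≤ ⟪g0, x - xstar⟫ := by
    have h := hg0 xstar
    rw [show xstar - x = -(x - xstar) from (neg_sub _ _).symm, inner_neg_right] at h
    linarith
  have hgi : ∀ i, F i ≤ ⟪g i, x - xstar⟫ := by
    intro i
    have h := hg i xstar
    rw [show xstar - x = -(x - xstar) from (neg_sub _ _).symm, inner_neg_right,
      max_eq_right (hxfeas i)] at h
    rw [hFi i]; linarith
  -- the sum bound
  have hsum1 : ∑ i, (lam i + ρ * ϱ i) * F i ≤ ∑ i, (lam i + ρ * ϱ i) * ⟪g i, x - xstar⟫ :=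
    Finset.sum_le_sum fun i _ => mul_le_mul_of_nonneg_left (hgi i) (hcoef i)
  have hsum2 : ∑ i, (lam i + ρ * ϱ i) * F i = ⟪lam, F⟫ + ρ * ⟪ϱ, F⟫ := by
    simp only [PiLp.inner_apply, RCLike.inner_apply, conj_trivial]
    rw [Finset.mul_sum, ← Finset.sum_add_distrib]
    apply Finset.sum_congr rfl; intro i _; ring
  -- expansion of ⟪Tx, x - xstar⟫
  have hAd : mulVecE A (x - xstar) = r := by
    rw [mulVecE_sub, hxeq, hrdef]
  have hTexp : ⟪Tx, x - xstar⟫ = ⟪g0, x - xstar⟫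
      + (∑ i, (lam i + ρ * ϱ i) * ⟪g i, x - xstar⟫) + (⟪nu, r⟫ + ρ * ⟪ς, r⟫) := by
    rw [hTx, inner_add_left, inner_add_left, sum_inner, inner_mulVecE_transpose, hAd,
      inner_add_left, real_inner_smul_left,
      Finset.sum_congr rfl (fun i _ => real_inner_smul_left (g i) (x - xstar) (lam i + ρ * ϱ i))]
  -- dual components
  have h1 : ⟪-F, lam - lamstar⟫ = ⟪lamstar, F⟫ - ⟪lam, F⟫ := by
    rw [inner_neg_left, inner_sub_right, real_inner_comm F lam, real_inner_comm F lamstar]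
    ring
  have h2 : ⟪-r, nu - nustar⟫ = ⟪nustar, r⟫ - ⟪nu, r⟫ := by
    rw [inner_neg_left, inner_sub_right, real_inner_comm r nu, real_inner_comm r nustar]
    ring
  have hLagx : Lag f0 f A b x lamstar nustar = f0 x + ⟪lamstar, F⟫ + ⟪nustar, r⟫ := rfl
  constructor
  · rw [hTexp, h1, h2, hLagx, ← hxval]
    rw [hϱF] at hsum2
    rw [hςr]
    nlinarith [hsum1, hsum2, hg0x]
  · have hn1 : 0 ≤ ‖F‖ ^ s := Real.rpow_nonneg (norm_nonneg _) _
    have hn2 : 0 ≤ ‖r‖ ^ s := Real.rpow_nonneg (norm_nonneg _) _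
    have h3 := hsaddle2 x
    have h4 : 0 ≤ ρ * s * (‖F‖ ^ s + ‖r‖ ^ s) :=
      mul_nonneg (mul_nonneg hρ.le hspos.le) (add_nonneg hn1 hn2)
    linarith
end
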